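/- arXiv:2002.04315 — 2 statements merged into one kernel-verified Lean document; each statement's English description precedes it below -/
import Mathlib

section
/- Under the same symplectic RK hypotheses, the discrete generalized energy is conserved: trace(Q_{k+1}ᵀQ_{k+1}) = trace(Q_kᵀQ_k). -/
open Matrix

theorem symplectic_rk_energy {M s : ℕ} (S : Matrix (Fin M) (Fin M) ℝ)
    (hS : Sᵀ = -S) (Δt : ℝ)
    (a : Fin s → Fin s → ℝ) (b : Fin s → ℝ)
    (hsymp : ∀ i j, b i * a i j + b j * a j i - b i * b j = 0)
    (Qk Qk1 : Matrix (Fin M) (Fin M) ℝ) (Y : Fin s → Matrix (Fin M) (Fin M) ℝ)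
    (hY : ∀ i, Y i = Qk + Δt • ∑ j, a i j • (S * Y j))
    (hQk1 : Qk1 = Qk + Δt • ∑ i, b i • (S * Y i)) :
    (Qk1ᵀ * Qk1).trace = (Qkᵀ * Qk).trace := by
  set Z : Fin s → Matrix (Fin M) (Fin M) ℝ := fun i => S * Y i with hZ
  -- symmetry of the trace pairing
  have hT : ∀ i j : Fin s, ((Z i)ᵀ * Z j).trace = ((Z j)ᵀ * Z i).trace := by
    intro i j
    conv_lhs => rw [← trace_transpose, transpose_mul, transpose_transpose]
  -- trace(Yᵢᵀ Zᵢ) = 0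
  have hYZ : ∀ i, ((Y i)ᵀ * Z i).trace = 0 := by
    intro i
    have h1 : ((Y i)ᵀ * Z i).trace = -((Y i)ᵀ * Z i).trace := by
      conv_lhs => rw [← trace_transpose]
      simp only [hZ, transpose_mul, transpose_transpose, hS, Matrix.neg_mul,
        Matrix.mul_neg, trace_neg, Matrix.mul_assoc]
    linarith
  -- trace(Qkᵀ Zᵢ)
  have hQ : ∀ i, (Qkᵀ * Z i).trace = -(Δt * ∑ j, a i j * ((Z j)ᵀ * Z i).trace) := by
    intro i
    have hq : Qk = Y i - Δt • ∑ j, a i j • Z j := by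
      rw [hY i]; abel
    rw [hq]
    simp [transpose_sub, transpose_smul, transpose_sum, Matrix.sub_mul,
      Matrix.sum_mul, Matrix.smul_mul, trace_sub, trace_smul, trace_sum,
      hYZ i, Finset.mul_sum, smul_eq_mul]
  set B : Matrix (Fin M) (Fin M) ℝ := Δt • ∑ i, b i • Z i with hBdef
  have hB : Qk1 = Qk + B := hQk1
  have hBQ : (Bᵀ * Qk).trace = (Qkᵀ * B).trace := by
    conv_lhs => rw [← trace_transpose, transpose_mul, transpose_transpose]
  have expand : (Qk1ᵀ * Qk1).trace
      = (Qkᵀ * Qk).trace + 2 * (Qkᵀ * B).trace + (Bᵀ * B).trace := by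
    rw [hB]
    simp only [transpose_add, Matrix.add_mul, Matrix.mul_add, trace_add]
    rw [hBQ]; ring
  have hQB : (Qkᵀ * B).trace = Δt * ∑ i, b i * (Qkᵀ * Z i).trace := by
    simp [hBdef, Matrix.mul_smul, Matrix.mul_sum, trace_smul, trace_sum,
      Finset.mul_sum, smul_eq_mul]
  have hBB : (Bᵀ * B).trace
      = Δt * (Δt * ∑ i, ∑ j, b i * (b j * ((Z i)ᵀ * Z j).trace)) := by
    simp [hBdef, transpose_smul, transpose_sum, Matrix.smul_mul, Matrix.mul_smul,
      Matrix.sum_mul, Matrix.mul_sum, trace_smul, trace_sum, Finset.mul_sum,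
      smul_eq_mul, mul_assoc]
    exact Finset.sum_congr rfl fun x _ => Finset.sum_congr rfl fun i _ => by
      rw [hT i x]; ring
  have key : ∑ i, ∑ j, b i * (b j * ((Z i)ᵀ * Z j).trace)
      = 2 * ∑ i, ∑ j, b i * (a i j * ((Z j)ᵀ * Z i).trace) := by
    have h1 : ∀ i j : Fin s, b i * (b j * ((Z i)ᵀ * Z j).trace)
        = b i * (a i j * ((Z j)ᵀ * Z i).trace)
          + b j * (a j i * ((Z i)ᵀ * Z j).trace) := by
      intro i j
      rw [hT j i]
      linear_combination (-((Z i)ᵀ * Z j).trace) * hsymp i j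
    calc ∑ i, ∑ j, b i * (b j * ((Z i)ᵀ * Z j).trace)
        = ∑ i, ∑ j, (b i * (a i j * ((Z j)ᵀ * Z i).trace)
            + b j * (a j i * ((Z i)ᵀ * Z j).trace)) := by
          exact Finset.sum_congr rfl fun i _ => Finset.sum_congr rfl fun j _ => h1 i j
      _ = ∑ i, ∑ j, b i * (a i j * ((Z j)ᵀ * Z i).trace)
            + ∑ i, ∑ j, b j * (a j i * ((Z i)ᵀ * Z j).trace) := by
          simp [Finset.sum_add_distrib]
      _ = 2 * ∑ i, ∑ j, b i * (a i j * ((Z j)ᵀ * Z i).trace) := by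
          rw [Finset.sum_comm (f := fun i j => b j * (a j i * ((Z i)ᵀ * Z j).trace))]
          ring
  rw [expand, hQB, hBB]
  have hsum : ∑ i, b i * (Qkᵀ * Z i).trace
      = -(Δt * ∑ i, ∑ j, b i * (a i j * ((Z j)ᵀ * Z i).trace)) := by
    simp only [hQ]
    rw [Finset.mul_sum, ← Finset.sum_neg_distrib]
    refine Finset.sum_congr rfl fun i _ => ?_
    simp only [mul_neg, neg_inj, Finset.mul_sum]
    exact Finset.sum_congr rfl fun j _ => by ring
  linear_combination 2 * Δt * hsum + Δt * Δt * key
end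

section
/- For the explicit second-order RK update Q_{k+1} = (I + ΔtS + ½Δt²S²)Q_k with S skew-symmetric and nonzero, and Δt ≠ 0: if Q_kᵀQ_k = I, then trace(Q_{k+1}ᵀQ_{k+1}) > trace(Q_kᵀQ_k), i.e., the discrete energy strictly grows. -/
open Matrix

theorem explicit_rk2_energy_growth {M : ℕ} (S : Matrix (Fin M) (Fin M) ℝ)
    (hS : Sᵀ = -S) (hS0 : S ≠ 0) (Δt : ℝ) (hΔt : Δt ≠ 0)
    (Qk Qk1 : Matrix (Fin M) (Fin M) ℝ) (hQk : Qkᵀ * Qk = 1)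
    (hQk1 : Qk1 = (1 + Δt • S + (Δt ^ 2 / 2) • (S * S)) * Qk) :
    (Qkᵀ * Qk).trace < (Qk1ᵀ * Qk1).trace := by
  set B := S * S with hB
  -- S*S ≠ 0
  have hB0 : B ≠ 0 := by
    intro h
    apply hS0
    have hstar : Sᴴ = Sᵀ := by
      ext i j; simp [conjTranspose]
    have : Sᴴ * S = 0 := by
      rw [hstar, hS, Matrix.neg_mul, ← hB, h, neg_zero]
    exact conjTranspose_mul_self_eq_zero.mp this
  -- key algebraic identity
  have hAA : ((1 : Matrix (Fin M) (Fin M) ℝ) + Δt • S + (Δt ^ 2 / 2) • (S * S))ᵀ *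
      (1 + Δt • S + (Δt ^ 2 / 2) • (S * S))
      = 1 + (Δt ^ 4 / 4) • (Bᵀ * B) := by
    have hBT : Bᵀ = B := by rw [hB, transpose_mul, hS]; simp
    rw [hBT]
    simp only [hB, transpose_add, transpose_smul, transpose_mul, transpose_one, hS]
    simp only [mul_add, add_mul, Matrix.smul_mul, Matrix.mul_smul, mul_one, one_mul,
      Matrix.neg_mul, Matrix.mul_neg, smul_neg, neg_neg, smul_smul, mul_neg, neg_mul,
      Matrix.mul_assoc]
    module
  have hQQ : Qk * Qkᵀ = 1 := mul_eq_one_comm.mp hQk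
  have htr : (Qk1ᵀ * Qk1).trace = (1 : Matrix (Fin M) (Fin M) ℝ).trace
      + (Δt ^ 4 / 4) * (Bᵀ * B).trace := by
    rw [hQk1, transpose_mul, Matrix.mul_assoc, ← Matrix.mul_assoc _ _ Qk, hAA,
      ← Matrix.mul_assoc, trace_mul_comm, ← Matrix.mul_assoc, hQQ, one_mul]
    simp [add_mul, trace_add, trace_smul, smul_eq_mul]
  have hBtr : 0 < (Bᵀ * B).trace := by
    have heq : (Bᵀ * B).trace = ∑ j, ∑ i, B i j * B i j := by
      simp [trace, mul_apply, diag, transpose_apply]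
    rw [heq]
    have hnonneg : ∀ j ∈ Finset.univ, (0:ℝ) ≤ ∑ i, B i j * B i j := fun j _ =>
      Finset.sum_nonneg fun i _ => mul_self_nonneg _
    have : ∃ i j, B i j ≠ 0 := by
      by_contra hcon
      push_neg at hcon
      exact hB0 (Matrix.ext fun i j => hcon i j)
    rcases this with ⟨i, j, hij⟩
    · refine lt_of_lt_of_le ?_ (Finset.single_le_sum hnonneg (Finset.mem_univ j))
      refine lt_of_lt_of_le ?_ (Finset.single_le_sum
        (fun i _ => mul_self_nonneg (B i j)) (Finset.mem_univ i))
      exact mul_self_pos.mpr hij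
  have hc : 0 < Δt ^ 4 / 4 := by positivity
  rw [hQk, htr]
  nlinarith [mul_pos hc hBtr]
end
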